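/- arXiv:1610.00787 — 8 statements merged into one kernel-verified Lean document; each statement's English description precedes it below -/
import Mathlib

section
/- Suppose the total power vector admits a decomposition p^T = B d + c where d ∈ ℝ^q and c ∈ ℝ^n are nonnegative, B is the n×q incidence matrix of the adversary pairs, and there is no adversary pair {i,j} with both c_i > 0 and c_j > 0. Then the power allocation game has a pure strategy Nash equilibrium. -/
open Finset

/-- An admissible strategy matrix: nonnegative entries, zero allocation to
non-neighbors, and row `i` sums to the total power `p i`. -/
def Admissible {n : ℕ} (p : Fin n → ℝ) (F A : Fin n → Finset (Fin n))
    (U : Fin n → Fin n → ℝ) : Prop :=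
  (∀ i j, 0 ≤ U i j) ∧
  (∀ i j, j ≠ i → j ∉ F i → j ∉ A i → U i j = 0) ∧
  (∀ i, ∑ j, U i j = p i)

/-- The support `σ_i(U) = u_ii + Σ_{j∈F_i} u_ji + Σ_{j∈A_i} u_ij`. -/
def supportOf {n : ℕ} (F A : Fin n → Finset (Fin n)) (U : Fin n → Fin n → ℝ)
    (i : Fin n) : ℝ :=
  U i i + ∑ j ∈ F i, U j i + ∑ j ∈ A i, U i j

/-- The threat `τ_i(U) = Σ_{j∈A_i} u_ji`. -/
def threatOf {n : ℕ} (A : Fin n → Finset (Fin n)) (U : Fin n → Fin n → ℝ)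
    (i : Fin n) : ℝ :=
  ∑ j ∈ A i, U j i

/-- A unilateral deviation by country `i` from `U`: an admissible matrix `V`
agreeing with `U` on every row except possibly row `i`. -/
def Deviation {n : ℕ} (p : Fin n → ℝ) (F A : Fin n → Finset (Fin n))
    (U V : Fin n → Fin n → ℝ) (i : Fin n) : Prop :=
  Admissible p F A V ∧ ∀ k, k ≠ i → V k = U k

/-- Pure strategy Nash equilibrium: `U` is admissible and no country `i` has a
unilateral deviation `V` it strictly prefers, where `i` strictly prefers `V`
to `U` iff `x_i(U)` is unsafe (`σ_i(U) < τ_i(U)`) and `x_i(V)` is safe or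
precarious (`τ_i(V) ≤ σ_i(V)`). -/
def NashEq {n : ℕ} (p : Fin n → ℝ) (F A : Fin n → Finset (Fin n))
    (U : Fin n → Fin n → ℝ) : Prop :=
  Admissible p F A U ∧
    ∀ i V, Deviation p F A U V i →
      ¬ (supportOf F A U i < threatOf A U i ∧
          threatOf A V i ≤ supportOf F A V i)

/-- Incidence matrix of the edges/adversary pairs enumerated by `e`. -/
def incB {n q : ℕ} (e : Fin q → Fin n × Fin n) (i : Fin n) (k : Fin q) : ℝ :=
  if i = (e k).1 ∨ i = (e k).2 then 1 else 0

/-- The greedy recursion: `z 0 = p` and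
`z (k+1) = z k − min{z_{i}(k), z_{j}(k)}·(e_i + e_j)` for the `(k+1)`-th edge
`{i,j}` (when `k < q`). -/
def greedyZ {n q : ℕ} (p : Fin n → ℝ) (e : Fin q → Fin n × Fin n) :
    ℕ → Fin n → ℝ
  | 0 => p
  | k + 1 => fun i =>
      if h : k < q then
        greedyZ p e k i -
          min (greedyZ p e k (e ⟨k, h⟩).1) (greedyZ p e k (e ⟨k, h⟩).2) *
            ((if i = (e ⟨k, h⟩).1 then (1 : ℝ) else 0) +
              (if i = (e ⟨k, h⟩).2 then (1 : ℝ) else 0))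
      else greedyZ p e k i

/-- The strategy matrix constructed from a decomposition: `u_ij = u_ji = d_k`
on the `k`-th adversary pair `{i,j}`, reserves `u_ii = c_i`, zeros elsewhere. -/
def stratU {n q : ℕ} (e : Fin q → Fin n × Fin n) (d : Fin q → ℝ)
    (c : Fin n → ℝ) : Fin n → Fin n → ℝ :=
  fun i j => (if i = j then c i else 0) +
    ∑ k, if e k = (i, j) ∨ e k = (j, i) then d k else 0

/-- if the total power vector decomposes as `p = B d + c` with
`d, c ≥ 0` and no adversary pair having both reserves positive, then the game
has a pure strategy Nash equilibrium. -/
theorem stmt1 (n q : ℕ) (p : Fin n → ℝ) (hp : ∀ i, 0 ≤ p i)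
    (F A : Fin n → Finset (Fin n))
    (hFi : ∀ i, i ∉ F i) (hAi : ∀ i, i ∉ A i)
    (hFA : ∀ i, Disjoint (F i) (A i))
    (hFsymm : ∀ i j, j ∈ F i ↔ i ∈ F j)
    (hAsymm : ∀ i j, j ∈ A i ↔ i ∈ A j)
    (pair : Fin q → Fin n × Fin n)
    (hadv : ∀ k, (pair k).2 ∈ A (pair k).1)
    (henum : ∀ i j, j ∈ A i → ∃! k, pair k = (i, j) ∨ pair k = (j, i))
    (d : Fin q → ℝ) (c : Fin n → ℝ)
    (hd : ∀ k, 0 ≤ d k) (hc : ∀ i, 0 ≤ c i)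
    (hdec : ∀ i, p i = (∑ k, incB pair i k * d k) + c i)
    (hnot : ∀ i j, j ∈ A i → ¬ (0 < c i ∧ 0 < c j)) :
    ∃ U : Fin n → Fin n → ℝ, NashEq p F A U := by
  classical
  set U := stratU pair d c with hU
  have hne : ∀ k : Fin q, (pair k).1 ≠ (pair k).2 := by
    intro k h
    exact hAi (pair k).1 (h ▸ hadv k)
  have hUnn : ∀ i j, 0 ≤ U i j := by
    intro i j
    apply add_nonneg
    · split
      · exact hc i
      · exact le_rfl
    · exact Finset.sum_nonneg fun k _ => by
        split
        · exact hd k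
        · exact le_rfl
  have hsymm : ∀ i j, i ≠ j → U i j = U j i := by
    intro i j hij
    simp only [hU, stratU, if_neg hij, if_neg (Ne.symm hij), zero_add]
    apply Finset.sum_congr rfl
    intro k _
    exact if_congr or_comm rfl rfl
  have hzero : ∀ i j, j ≠ i → j ∉ F i → j ∉ A i → U i j = 0 := by
    intro i j hji _ hjA
    simp only [hU, stratU, if_neg (Ne.symm hji), zero_add]
    apply Finset.sum_eq_zero
    intro k _
    rw [if_neg]
    rintro (h | h)
    · apply hjA; have := hadv k; rw [h] at this; exact this
    · apply hjA; rw [hAsymm]; have := hadv k; rw [h] at this; exact this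
  have key : ∀ (i : Fin n) (k : Fin q),
      (∑ j, if pair k = (i, j) ∨ pair k = (j, i) then d k else 0)
        = incB pair i k * d k := by
    intro i k
    by_cases h1 : i = (pair k).1
    · have hcond : ∀ j, (pair k = (i, j) ∨ pair k = (j, i)) ↔ (pair k).2 = j := by
        intro j
        constructor
        · rintro (h | h)
          · rw [h]
          · exact absurd (h1.symm.trans (congrArg Prod.snd h).symm) (hne k)
        · intro h
          left
          rw [Prod.ext_iff]
          exact ⟨h1.symm, h⟩
      simp only [hcond]
      rw [Finset.sum_ite_eq]
      simp [incB, h1]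
    · by_cases h2 : i = (pair k).2
      · have hcond : ∀ j, (pair k = (i, j) ∨ pair k = (j, i)) ↔ (pair k).1 = j := by
          intro j
          constructor
          · rintro (h | h)
            · exfalso
              apply h1
              rw [h]
            · rw [h]
          · intro h
            right
            rw [Prod.ext_iff]
            exact ⟨h, h2.symm⟩
        simp only [hcond]
        rw [Finset.sum_ite_eq]
        simp [incB, h2]
      · have hcond : ∀ j, ¬ (pair k = (i, j) ∨ pair k = (j, i)) := by
          rintro j (h | h)
          · exact h1 (by rw [h])
          · exact h2 (by rw [h])
        simp only [if_neg (hcond _)]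
        simp [incB, h1, h2]
  have hrow : ∀ i, ∑ j, U i j = p i := by
    intro i
    simp only [hU, stratU]
    rw [Finset.sum_add_distrib, Finset.sum_comm]
    rw [Finset.sum_ite_eq]
    simp only [Finset.mem_univ, if_pos]
    rw [hdec i, Finset.sum_congr rfl fun k _ => key i k]
    ring
  refine ⟨U, ⟨hUnn, hzero, hrow⟩, ?_⟩
  rintro i V hdev ⟨hlt, _⟩
  have hle : threatOf A U i ≤ supportOf F A U i := by
    unfold supportOf threatOf
    have h1 : ∑ j ∈ A i, U j i = ∑ j ∈ A i, U i j := by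
      apply Finset.sum_congr rfl
      intro j hj
      have hji : j ≠ i := fun h => hAi i (h ▸ hj)
      exact (hsymm i j hji.symm).symm
    rw [h1]
    have h2 : (0:ℝ) ≤ ∑ j ∈ F i, U j i :=
      Finset.sum_nonneg fun j _ => hUnn j i
    have h3 := hUnn i i
    linarith
  linarith
end

section
/- For every nonnegative vector p ∈ ℝ^n and every finite simple graph G on vertex set {1,…,n} with q edges and incidence matrix B, there exist a nonnegative vector d ∈ ℝ^q and a nonnegative vector c ∈ ℝ^n such that p = B d + c and no edge {i,j} of G has both c_i > 0 and c_j > 0. -/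
open Finset

section greedy
variable {n q : ℕ} (p : Fin n → ℝ) (e : Fin q → Fin n × Fin n)

lemma greedyZ_nonneg (hp : ∀ i, 0 ≤ p i) (hne : ∀ k, (e k).1 ≠ (e k).2) :
    ∀ m i, 0 ≤ greedyZ p e m i := by
  intro m
  induction m with
  | zero => exact hp
  | succ k ih =>
    intro i
    simp only [greedyZ]
    by_cases h : k < q
    · rw [dif_pos h]
      by_cases h1 : i = (e ⟨k, h⟩).1
      · have h2 : i ≠ (e ⟨k, h⟩).2 := by rw [h1]; exact hne _
        rw [if_pos h1, if_neg h2, h1]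
        have := min_le_left (greedyZ p e k (e ⟨k,h⟩).1) (greedyZ p e k (e ⟨k,h⟩).2)
        linarith
      · rw [if_neg h1]
        by_cases h2 : i = (e ⟨k, h⟩).2
        · rw [if_pos h2, h2]
          have := min_le_right (greedyZ p e k (e ⟨k,h⟩).1) (greedyZ p e k (e ⟨k,h⟩).2)
          linarith
        · rw [if_neg h2]
          simpa using ih i
    · rw [dif_neg h]; exact ih i

lemma greedyZ_step_le (hp : ∀ i, 0 ≤ p i) (hne : ∀ k, (e k).1 ≠ (e k).2)
    (k : ℕ) (i : Fin n) : greedyZ p e (k+1) i ≤ greedyZ p e k i := by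
  simp only [greedyZ]
  by_cases h : k < q
  · rw [dif_pos h]
    have hmin : 0 ≤ min (greedyZ p e k (e ⟨k,h⟩).1) (greedyZ p e k (e ⟨k,h⟩).2) :=
      le_min (greedyZ_nonneg p e hp hne _ _) (greedyZ_nonneg p e hp hne _ _)
    have hind : (0:ℝ) ≤ (if i = (e ⟨k, h⟩).1 then (1 : ℝ) else 0) +
        (if i = (e ⟨k, h⟩).2 then (1 : ℝ) else 0) := by positivity
    nlinarith
  · rw [dif_neg h]

lemma greedyZ_antitone (hp : ∀ i, 0 ≤ p i) (hne : ∀ k, (e k).1 ≠ (e k).2) :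
    ∀ m m', m ≤ m' → ∀ i, greedyZ p e m' i ≤ greedyZ p e m i := by
  intro m m'
  induction m' with
  | zero =>
    intro hmm i
    have : m = 0 := Nat.le_zero.mp hmm
    rw [this]
  | succ k ih =>
    intro hmm i
    rcases Nat.lt_or_ge m (k+1) with h'|h'
    · exact le_trans (greedyZ_step_le p e hp hne k i) (ih (Nat.lt_succ_iff.mp h') i)
    · have : m = k + 1 := le_antisymm hmm h'
      rw [this]

lemma greedyZ_persist_zero (hp : ∀ i, 0 ≤ p i) (hne : ∀ k, (e k).1 ≠ (e k).2)
    {m m' : ℕ} (h : m ≤ m') {i : Fin n} (hz : greedyZ p e m i = 0) :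
    greedyZ p e m' i = 0 :=
  le_antisymm (hz ▸ greedyZ_antitone p e hp hne m m' h i) (greedyZ_nonneg p e hp hne m' i)

end greedy

/-- for every nonnegative `p` and every finite simple graph
(edges enumerated by `e`, pairwise distinct as unordered pairs, with distinct
endpoints) there is a nonnegative decomposition `p = B d + c` with no edge
having both `c`-entries positive. -/
theorem stmt2 (n q : ℕ) (p : Fin n → ℝ) (hp : ∀ i, 0 ≤ p i)
    (e : Fin q → Fin n × Fin n)
    (hne : ∀ k, (e k).1 ≠ (e k).2)
    (hinj : ∀ k l, e k = e l ∨ e k = ((e l).2, (e l).1) → k = l) :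
    ∃ (d : Fin q → ℝ) (c : Fin n → ℝ),
      (∀ k, 0 ≤ d k) ∧ (∀ i, 0 ≤ c i) ∧
      (∀ i, p i = (∑ k, incB e i k * d k) + c i) ∧
      (∀ k, ¬ (0 < c (e k).1 ∧ 0 < c (e k).2)) := by
  classical
  set d : Fin q → ℝ := fun k =>
    min (greedyZ p e (k:ℕ) (e k).1) (greedyZ p e (k:ℕ) (e k).2) with hd
  have hdnn : ∀ k, 0 ≤ d k := fun k =>
    le_min (greedyZ_nonneg p e hp hne _ _) (greedyZ_nonneg p e hp hne _ _)
  have key : ∀ m, m ≤ q → ∀ i,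
      p i = (∑ k : Fin q, if (k:ℕ) < m then incB e i k * d k else 0) + greedyZ p e m i := by
    intro m
    induction m with
    | zero => intro _ i; simp [greedyZ]
    | succ m ih =>
      intro hm i
      have hm' : m < q := hm
      have hml : m ≤ q := le_of_lt hm'
      have hind : ((if i = (e ⟨m,hm'⟩).1 then (1:ℝ) else 0) +
          (if i = (e ⟨m,hm'⟩).2 then (1:ℝ) else 0)) = incB e i ⟨m,hm'⟩ := by
        unfold incB
        by_cases h1 : i = (e ⟨m,hm'⟩).1
        · have h2 : i ≠ (e ⟨m,hm'⟩).2 := by rw [h1]; exact hne _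
          simp [h1, h2, hne ⟨m,hm'⟩]
        · by_cases h2 : i = (e ⟨m,hm'⟩).2 <;> simp [h1, h2, (hne ⟨m,hm'⟩).symm]
      have hstep : greedyZ p e (m+1) i
          = greedyZ p e m i - incB e i ⟨m, hm'⟩ * d ⟨m, hm'⟩ := by
        simp only [greedyZ, dif_pos hm', hind]
        have hdm : d ⟨m,hm'⟩
            = min (greedyZ p e m (e ⟨m,hm'⟩).1) (greedyZ p e m (e ⟨m,hm'⟩).2) := rfl
        rw [hdm]; ring
      have hsum : (∑ k : Fin q, if (k:ℕ) < m+1 then incB e i k * d k else 0)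
          = (∑ k : Fin q, if (k:ℕ) < m then incB e i k * d k else 0)
            + incB e i ⟨m,hm'⟩ * d ⟨m,hm'⟩ := by
        have hterm : ∀ k : Fin q, (if (k:ℕ) < m+1 then incB e i k * d k else 0)
            = (if (k:ℕ) < m then incB e i k * d k else 0)
              + (if k = ⟨m,hm'⟩ then incB e i k * d k else 0) := by
          intro k
          rcases lt_trichotomy (k:ℕ) m with h|h|h
          · rw [if_pos (by omega), if_pos h, if_neg, add_zero]
            intro hk; rw [hk] at h; simp at h
          · have hk : k = ⟨m,hm'⟩ := Fin.ext h
            rw [if_pos (by omega), if_neg (by omega), if_pos hk, zero_add]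
          · rw [if_neg (by omega), if_neg (by omega), if_neg, add_zero]
            intro hk; rw [hk] at h; simp at h
        rw [Finset.sum_congr rfl (fun k _ => hterm k), Finset.sum_add_distrib,
          Finset.sum_ite_eq' Finset.univ (⟨m,hm'⟩ : Fin q) (fun k => incB e i k * d k)]
        simp
      rw [hsum, hstep]
      have := ih hml i
      linarith
  refine ⟨d, greedyZ p e q, hdnn, fun i => greedyZ_nonneg p e hp hne q i, ?_, ?_⟩
  · intro i
    have := key q le_rfl i
    simpa [Fin.is_lt] using this
  · rintro k ⟨h1, h2⟩
    have hk : (k:ℕ) < q := k.isLt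
    have hz1 : greedyZ p e ((k:ℕ)+1) (e k).1
        = greedyZ p e (k:ℕ) (e k).1
          - min (greedyZ p e (k:ℕ) (e k).1) (greedyZ p e (k:ℕ) (e k).2) := by
      simp only [greedyZ, dif_pos hk, Fin.eta]
      simp [hne k]
    have hz2 : greedyZ p e ((k:ℕ)+1) (e k).2
        = greedyZ p e (k:ℕ) (e k).2
          - min (greedyZ p e (k:ℕ) (e k).1) (greedyZ p e (k:ℕ) (e k).2) := by
      simp only [greedyZ, dif_pos hk, Fin.eta]
      simp [(hne k).symm]
    rcases min_cases (greedyZ p e (k:ℕ) (e k).1) (greedyZ p e (k:ℕ) (e k).2) with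
      ⟨hmin, _⟩ | ⟨hmin, _⟩
    · have hz0 : greedyZ p e ((k:ℕ)+1) (e k).1 = 0 := by rw [hz1, hmin]; ring
      have : greedyZ p e q (e k).1 = 0 :=
        greedyZ_persist_zero p e hp hne (by omega) hz0
      rw [this] at h1; exact lt_irrefl 0 h1
    · have hz0 : greedyZ p e ((k:ℕ)+1) (e k).2 = 0 := by rw [hz2, hmin]; ring
      have : greedyZ p e q (e k).2 = 0 :=
        greedyZ_persist_zero p e hp hne (by omega) hz0
      rw [this] at h2; exact lt_irrefl 0 h2
end

section
/- In the greedy recursion started at a nonnegative vector p, for every edge {i,j} of the graph one has min{z_i(q), z_j(q)} = 0; equivalently, z_i(q) and z_j(q) are never both positive for an edge {i,j}. -/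
open Finset

lemma gz_nonneg {n q : ℕ} (p : Fin n → ℝ) (hp : ∀ i, 0 ≤ p i)
    (e : Fin q → Fin n × Fin n) (hne : ∀ k, (e k).1 ≠ (e k).2) :
    ∀ m i, 0 ≤ greedyZ p e m i := by
  intro m
  induction m with
  | zero => exact hp
  | succ k ih =>
    intro i
    show 0 ≤ greedyZ p e (k + 1) i
    simp only [greedyZ]
    split
    · rename_i h
      set a := (e ⟨k, h⟩).1 with ha
      set b := (e ⟨k, h⟩).2 with hb
      have hab : a ≠ b := hne ⟨k, h⟩
      by_cases hia : i = a
      · subst hia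
        rw [if_pos rfl, if_neg hab, add_zero, mul_one]
        have := min_le_left (greedyZ p e k a) (greedyZ p e k b)
        linarith
      · by_cases hib : i = b
        · subst hib
          rw [if_neg hia, if_pos rfl, zero_add, mul_one]
          have := min_le_right (greedyZ p e k a) (greedyZ p e k b)
          linarith
        · simp only [if_neg hia, if_neg hib]
          have := ih i
          linarith
    · exact ih i

lemma gz_mono {n q : ℕ} (p : Fin n → ℝ) (hp : ∀ i, 0 ≤ p i)
    (e : Fin q → Fin n × Fin n) (hne : ∀ k, (e k).1 ≠ (e k).2) :
    ∀ m i, greedyZ p e (m + 1) i ≤ greedyZ p e m i := by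
  intro m i
  simp only [greedyZ]
  split
  · rename_i h
    have h0 : 0 ≤ min (greedyZ p e m (e ⟨m, h⟩).1) (greedyZ p e m (e ⟨m, h⟩).2) :=
      le_min (gz_nonneg p hp e hne m _) (gz_nonneg p hp e hne m _)
    have h1 : (0:ℝ) ≤ (if i = (e ⟨m, h⟩).1 then (1 : ℝ) else 0) +
        (if i = (e ⟨m, h⟩).2 then (1 : ℝ) else 0) := by positivity
    nlinarith
  · exact le_refl _

lemma gz_min_zero {n q : ℕ} (p : Fin n → ℝ) (hp : ∀ i, 0 ≤ p i)
    (e : Fin q → Fin n × Fin n) (hne : ∀ k, (e k).1 ≠ (e k).2)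
    (k : Fin q) :
    ∀ m, (k : ℕ) + 1 ≤ m →
      min (greedyZ p e m (e k).1) (greedyZ p e m (e k).2) = 0 := by
  intro m
  induction m with
  | zero => omega
  | succ j ih =>
    intro hj
    rcases Nat.lt_or_ge (k : ℕ) j with hlt | hge
    · have h0 := ih hlt
      have hle : min (greedyZ p e (j + 1) (e k).1) (greedyZ p e (j + 1) (e k).2) ≤ 0 := by
        rw [← h0]
        exact min_le_min (gz_mono p hp e hne j _) (gz_mono p hp e hne j _)
      have hge0 : 0 ≤ min (greedyZ p e (j + 1) (e k).1) (greedyZ p e (j + 1) (e k).2) :=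
        le_min (gz_nonneg p hp e hne _ _) (gz_nonneg p hp e hne _ _)
      linarith
    · have hkj : (k : ℕ) = j := by omega
      have hjq : j < q := hkj ▸ k.isLt
      have hek : (⟨j, hjq⟩ : Fin q) = k := by
        apply Fin.ext; simp [hkj]
      have hab : (e k).1 ≠ (e k).2 := hne k
      have e1 : greedyZ p e (j + 1) (e k).1 =
          greedyZ p e j (e k).1 - min (greedyZ p e j (e k).1) (greedyZ p e j (e k).2) := by
        simp only [greedyZ, dif_pos hjq, hek]
        simp [hab]
      have e2 : greedyZ p e (j + 1) (e k).2 =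
          greedyZ p e j (e k).2 - min (greedyZ p e j (e k).1) (greedyZ p e j (e k).2) := by
        simp only [greedyZ, dif_pos hjq, hek]
        simp [hab.symm]
      rw [e1, e2, min_sub_sub_right, sub_self]

/-- after the greedy recursion, for every edge `{i,j}` one has
`min{z_i(q), z_j(q)} = 0`. -/
theorem stmt4 (n q : ℕ) (p : Fin n → ℝ) (hp : ∀ i, 0 ≤ p i)
    (e : Fin q → Fin n × Fin n)
    (hne : ∀ k, (e k).1 ≠ (e k).2) :
    ∀ k : Fin q, min (greedyZ p e q (e k).1) (greedyZ p e q (e k).2) = 0 := by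
  intro k
  exact gz_min_zero p hp e hne k q (by omega)
end

section
/- Given a decomposition p^T = B d + c with d ∈ ℝ^q and c ∈ ℝ^n nonnegative, the matrix U defined by u_ij = u_ji = d_k for the k-th adversary pair {i,j}, u_ii = c_i for every i, and u_ij = 0 for all other entries, is an admissible strategy matrix: it is nonnegative, vanishes outside {i} ∪ F_i ∪ A_i in each row i, and its i-th row sum equals p_i for every i. -/
open Finset

/-- the strategy matrix constructed from a nonnegative
decomposition `p = B d + c` is admissible. -/
theorem stmt6 (n q : ℕ) (p : Fin n → ℝ) (hp : ∀ i, 0 ≤ p i)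
    (F A : Fin n → Finset (Fin n))
    (hFi : ∀ i, i ∉ F i) (hAi : ∀ i, i ∉ A i)
    (hFA : ∀ i, Disjoint (F i) (A i))
    (hFsymm : ∀ i j, j ∈ F i ↔ i ∈ F j)
    (hAsymm : ∀ i j, j ∈ A i ↔ i ∈ A j)
    (pair : Fin q → Fin n × Fin n)
    (hadv : ∀ k, (pair k).2 ∈ A (pair k).1)
    (henum : ∀ i j, j ∈ A i → ∃! k, pair k = (i, j) ∨ pair k = (j, i))
    (d : Fin q → ℝ) (c : Fin n → ℝ)
    (hd : ∀ k, 0 ≤ d k) (hc : ∀ i, 0 ≤ c i)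
    (hdec : ∀ i, p i = (∑ k, incB pair i k * d k) + c i) :
    Admissible p F A (stratU pair d c) := by
  classical
  have hne : ∀ k : Fin q, (pair k).1 ≠ (pair k).2 := by
    intro k h
    exact hAi (pair k).1 (h ▸ hadv k)
  refine ⟨?_, ?_, ?_⟩
  · intro i j
    apply add_nonneg
    · split_ifs with h
      · exact hc i
      · exact le_refl 0
    · apply Finset.sum_nonneg
      intro k _
      split_ifs with h
      · exact hd k
      · exact le_refl 0
  · intro i j hji hF hA
    unfold stratU
    rw [if_neg (fun h => hji h.symm)]
    rw [Finset.sum_eq_zero, add_zero]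
    intro k _
    rw [if_neg]
    rintro (h | h)
    · apply hA
      have := hadv k
      rw [h] at this
      exact this
    · apply hA
      rw [hAsymm]
      have := hadv k
      rw [h] at this
      exact this
  · intro i
    unfold stratU
    rw [Finset.sum_add_distrib, Finset.sum_ite_eq (Finset.univ) i (fun _ => c i)]
    simp only [Finset.mem_univ, if_true]
    rw [Finset.sum_comm]
    rw [hdec i, add_comm]
    congr 1
    apply Finset.sum_congr rfl
    intro k _
    unfold incB
    by_cases h1 : i = (pair k).1
    · rw [if_pos (Or.inl h1), one_mul]
      rw [Finset.sum_eq_single (pair k).2]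
      · rw [if_pos (Or.inl (by rw [h1]))]
      · intro j _ hj
        rw [if_neg]
        rintro (h | h)
        · exact hj (by rw [h])
        · rw [Prod.ext_iff] at h
          exact hne k (h1.symm.trans h.2.symm)
      · intro habs; exact absurd (Finset.mem_univ _) habs
    · by_cases h2 : i = (pair k).2
      · rw [if_pos (Or.inr h2), one_mul]
        rw [Finset.sum_eq_single (pair k).1]
        · rw [if_pos (Or.inr (by rw [h2]))]
        · intro j _ hj
          rw [if_neg]
          rintro (h | h)
          · rw [Prod.ext_iff] at h
            exact hne k (h.1.trans h2)
          · exact hj (by rw [h])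
        · intro habs; exact absurd (Finset.mem_univ _) habs
      · rw [if_neg (by tauto), zero_mul]
        apply Finset.sum_eq_zero
        intro j _
        rw [if_neg]
        rintro (h | h)
        · exact h1 (by rw [h])
        · exact h2 (by rw [h])
end

section
/- For the strategy matrix U constructed from a nonnegative decomposition p^T = B d + c (allocations d_k to both members of adversary pair k, reserve c_i, zero to friends), every country i satisfies σ_i(U) − τ_i(U) = c_i. Consequently x_i(U) = safe if c_i > 0, x_i(U) = precarious if c_i = 0, and no country is unsafe under U. -/
open Finset

/-- for the constructed `U`, `σ_i(U) − τ_i(U) = c_i` for every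
country `i`; hence `i` is safe if `c_i > 0`, precarious if `c_i = 0`, and no
country is unsafe. -/
theorem stmt7 (n q : ℕ) (p : Fin n → ℝ) (hp : ∀ i, 0 ≤ p i)
    (F A : Fin n → Finset (Fin n))
    (hFi : ∀ i, i ∉ F i) (hAi : ∀ i, i ∉ A i)
    (hFA : ∀ i, Disjoint (F i) (A i))
    (hFsymm : ∀ i j, j ∈ F i ↔ i ∈ F j)
    (hAsymm : ∀ i j, j ∈ A i ↔ i ∈ A j)
    (pair : Fin q → Fin n × Fin n)
    (hadv : ∀ k, (pair k).2 ∈ A (pair k).1)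
    (henum : ∀ i j, j ∈ A i → ∃! k, pair k = (i, j) ∨ pair k = (j, i))
    (d : Fin q → ℝ) (c : Fin n → ℝ)
    (hd : ∀ k, 0 ≤ d k) (hc : ∀ i, 0 ≤ c i)
    (hdec : ∀ i, p i = (∑ k, incB pair i k * d k) + c i) :
    (∀ i, supportOf F A (stratU pair d c) i - threatOf A (stratU pair d c) i
        = c i) ∧
    (∀ i, 0 < c i →
      threatOf A (stratU pair d c) i < supportOf F A (stratU pair d c) i) ∧
    (∀ i, c i = 0 →
      supportOf F A (stratU pair d c) i = threatOf A (stratU pair d c) i) ∧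
    (∀ i, ¬ supportOf F A (stratU pair d c) i
        < threatOf A (stratU pair d c) i) := by
  have key : ∀ i, supportOf F A (stratU pair d c) i
      - threatOf A (stratU pair d c) i = c i := by
    intro i
    have hsymm : ∀ a b, stratU pair d c a b = stratU pair d c b a := by
      intro a b
      unfold stratU
      congr 1
      · by_cases h : a = b
        · subst h; simp
        · simp [h, Ne.symm h]
      · exact Finset.sum_congr rfl fun k _ => if_congr or_comm rfl rfl
    have hdiag : stratU pair d c i i = c i := by
      unfold stratU
      rw [if_pos rfl, Finset.sum_eq_zero, add_zero]
      intro k _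
      apply if_neg
      rintro (hk | hk) <;>
      · have h := hadv k
        rw [hk] at h
        exact hAi i h
    have hF0 : ∀ j ∈ F i, stratU pair d c j i = 0 := by
      intro j hj
      have hji : j ≠ i := fun h => hFi i (h ▸ hj)
      unfold stratU
      rw [if_neg hji, Finset.sum_eq_zero, add_zero]
      intro k _
      apply if_neg
      rintro (hk | hk)
      · have h := hadv k; rw [hk] at h
        exact Finset.disjoint_left.mp (hFA i) hj ((hAsymm j i).mp h)
      · have h := hadv k; rw [hk] at h
        exact Finset.disjoint_left.mp (hFA i) hj h
    unfold supportOf threatOf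
    have hs : ∑ j ∈ A i, stratU pair d c i j
        = ∑ j ∈ A i, stratU pair d c j i :=
      Finset.sum_congr rfl fun j _ => hsymm i j
    rw [hs, hdiag, Finset.sum_eq_zero hF0]
    ring
  refine ⟨key, ?_, ?_, ?_⟩
  · intro i hi; have := key i; linarith
  · intro i hi; have := key i; linarith
  · intro i; have := key i; have := hc i; linarith
end

section
/- For the strategy matrix U constructed from a nonnegative decomposition p^T = B d + c, every country i with c_i = 0 satisfies σ_i(U) = τ_i(U) = p_i; in particular x_i(U) = precarious. -/
open Finset

lemma stratU_symm {n q : ℕ} (e : Fin q → Fin n × Fin n) (d : Fin q → ℝ)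
    (c : Fin n → ℝ) (i j : Fin n) : stratU e d c i j = stratU e d c j i := by
  unfold stratU
  congr 1
  · rcases eq_or_ne i j with rfl | h
    · rfl
    · rw [if_neg h, if_neg h.symm]
  · exact Finset.sum_congr rfl fun k _ => if_congr or_comm rfl rfl

/-- for the constructed `U`, every country `i` with `c_i = 0`
satisfies `σ_i(U) = τ_i(U) = p_i`; in particular `i` is precarious. -/
theorem stmt8 (n q : ℕ) (p : Fin n → ℝ) (hp : ∀ i, 0 ≤ p i)
    (F A : Fin n → Finset (Fin n))
    (hFi : ∀ i, i ∉ F i) (hAi : ∀ i, i ∉ A i)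
    (hFA : ∀ i, Disjoint (F i) (A i))
    (hFsymm : ∀ i j, j ∈ F i ↔ i ∈ F j)
    (hAsymm : ∀ i j, j ∈ A i ↔ i ∈ A j)
    (pair : Fin q → Fin n × Fin n)
    (hadv : ∀ k, (pair k).2 ∈ A (pair k).1)
    (henum : ∀ i j, j ∈ A i → ∃! k, pair k = (i, j) ∨ pair k = (j, i))
    (d : Fin q → ℝ) (c : Fin n → ℝ)
    (hd : ∀ k, 0 ≤ d k) (hc : ∀ i, 0 ≤ c i)
    (hdec : ∀ i, p i = (∑ k, incB pair i k * d k) + c i)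
    (i : Fin n) (hci : c i = 0) :
    supportOf F A (stratU pair d c) i = p i ∧
    threatOf A (stratU pair d c) i = p i ∧
    supportOf F A (stratU pair d c) i = threatOf A (stratU pair d c) i := by
  have hUsymm : ∀ a b, stratU pair d c a b = stratU pair d c b a :=
    stratU_symm pair d c
  -- diagonal entry is c i = 0
  have hdiagU : stratU pair d c i i = 0 := by
    unfold stratU
    rw [if_pos rfl, hci, zero_add]
    apply Finset.sum_eq_zero
    intro k _
    rw [if_neg]
    rintro (h | h) <;>
    · have := hadv k
      rw [h] at this
      exact hAi i this
  -- friend contributions vanish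
  have hF0 : ∀ j ∈ F i, stratU pair d c j i = 0 := by
    intro j hj
    have hji : j ≠ i := fun h => hFi i (h ▸ hj)
    unfold stratU
    rw [if_neg hji, zero_add]
    apply Finset.sum_eq_zero
    intro k _
    rw [if_neg]
    rintro (h | h)
    · have := hadv k
      rw [h] at this
      exact Finset.disjoint_left.mp (hFA i) hj ((hAsymm i j).mpr this)
    · have := hadv k
      rw [h] at this
      exact Finset.disjoint_left.mp (hFA i) hj this
  -- key computation
  have hkey : ∀ k : Fin q,
      (∑ j ∈ A i, if pair k = (i, j) ∨ pair k = (j, i) then d k else 0)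
      = incB pair i k * d k := by
    intro k
    unfold incB
    by_cases h1 : i = (pair k).1
    · have h2 : i ≠ (pair k).2 := by
        intro h2
        have := hadv k
        rw [← h1, ← h2] at this
        exact hAi i this
      rw [if_pos (Or.inl h1), one_mul]
      have hmem : (pair k).2 ∈ A i := by rw [h1]; exact hadv k
      have hcong : ∀ j ∈ A i,
          (if pair k = (i, j) ∨ pair k = (j, i) then d k else 0)
          = if j = (pair k).2 then d k else 0 := by
        intro j _
        congr 1
        apply propext
        constructor
        · rintro (h | h)
          · rw [h]
          · exact absurd (by rw [h]) h2
        · intro h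
          left
          rw [Prod.ext_iff]
          exact ⟨h1.symm, h.symm⟩
      rw [Finset.sum_congr rfl hcong, Finset.sum_ite_eq' _ _ _, if_pos hmem]
    · by_cases h2 : i = (pair k).2
      · rw [if_pos (Or.inr h2), one_mul]
        have hmem : (pair k).1 ∈ A i := by
          apply (hAsymm i (pair k).1).mpr
          rw [h2]; exact hadv k
        have hcong : ∀ j ∈ A i,
            (if pair k = (i, j) ∨ pair k = (j, i) then d k else 0)
            = if j = (pair k).1 then d k else 0 := by
          intro j _
          congr 1
          apply propext
          constructor
          · rintro (h | h)
            · exact absurd (by rw [h]) h1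
            · rw [h]
          · intro h
            right
            rw [Prod.ext_iff]
            exact ⟨h.symm, h2.symm⟩
        rw [Finset.sum_congr rfl hcong, Finset.sum_ite_eq' _ _ _, if_pos hmem]
      · rw [if_neg (by tauto), zero_mul]
        apply Finset.sum_eq_zero
        intro j _
        rw [if_neg]
        rintro (h | h)
        · exact h1 (by rw [h])
        · exact h2 (by rw [h])
  -- threat equals p i
  have hτ : threatOf A (stratU pair d c) i = p i := by
    unfold threatOf
    rw [Finset.sum_congr rfl fun j _ => hUsymm j i]
    have hdiag : ∀ j ∈ A i, stratU pair d c i j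
        = ∑ k, if pair k = (i, j) ∨ pair k = (j, i) then d k else 0 := by
      intro j hj
      unfold stratU
      rw [if_neg (by rintro rfl; exact hAi i hj), zero_add]
    rw [Finset.sum_congr rfl hdiag, Finset.sum_comm,
      Finset.sum_congr rfl fun k _ => hkey k]
    have := hdec i
    rw [hci, add_zero] at this
    exact this.symm
  have hσ : supportOf F A (stratU pair d c) i = p i := by
    unfold supportOf
    rw [hdiagU, Finset.sum_eq_zero hF0, zero_add, zero_add]
    have : ∑ j ∈ A i, stratU pair d c i j
        = ∑ j ∈ A i, stratU pair d c j i :=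
      Finset.sum_congr rfl fun j _ => hUsymm i j
    rw [this]
    exact hτ
  exact ⟨hσ, hτ, hσ.trans hτ.symm⟩
end

section
/- Let U be the strategy matrix constructed from a nonnegative decomposition p^T = B d + c, and let i be a country with c_i = 0. Then for every unilateral deviation V by country i from U (any admissible strategy matrix agreeing with U on all rows except row i), one has σ_i(V) ≤ τ_i(V); in particular country i cannot make itself safe by any unilateral deviation (power deficiency). -/
open Finset

/-- power deficiency: for the constructed `U` and a country `i`
with `c_i = 0`, every unilateral deviation `V` by `i` satisfies
`σ_i(V) ≤ τ_i(V)`; in particular `i` cannot make itself safe. -/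
theorem stmt9 (n q : ℕ) (p : Fin n → ℝ) (hp : ∀ i, 0 ≤ p i)
    (F A : Fin n → Finset (Fin n))
    (hFi : ∀ i, i ∉ F i) (hAi : ∀ i, i ∉ A i)
    (hFA : ∀ i, Disjoint (F i) (A i))
    (hFsymm : ∀ i j, j ∈ F i ↔ i ∈ F j)
    (hAsymm : ∀ i j, j ∈ A i ↔ i ∈ A j)
    (pair : Fin q → Fin n × Fin n)
    (hadv : ∀ k, (pair k).2 ∈ A (pair k).1)
    (henum : ∀ i j, j ∈ A i → ∃! k, pair k = (i, j) ∨ pair k = (j, i))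
    (d : Fin q → ℝ) (c : Fin n → ℝ)
    (hd : ∀ k, 0 ≤ d k) (hc : ∀ i, 0 ≤ c i)
    (hdec : ∀ i, p i = (∑ k, incB pair i k * d k) + c i)
    (i : Fin n) (hci : c i = 0)
    (V : Fin n → Fin n → ℝ)
    (hV : Deviation p F A (stratU pair d c) V i) :
    supportOf F A V i ≤ threatOf A V i ∧
    ¬ threatOf A V i < supportOf F A V i := by
  obtain ⟨⟨hVnn, hVzero, hVsum⟩, hVagree⟩ := hV
  have hAne : ∀ k, (pair k).1 ≠ (pair k).2 := by
    intro k h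
    exact hAi (pair k).1 (h ▸ hadv k)
  have hthreat : threatOf A V i = p i := by
    unfold threatOf
    have h1 : ∀ j ∈ A i, V j i =
        ∑ k, if pair k = (j, i) ∨ pair k = (i, j) then d k else 0 := by
      intro j hj
      have hji : j ≠ i := fun h => hAi i (h ▸ hj)
      rw [congrFun (hVagree j hji) i]
      simp [stratU, hji]
    rw [Finset.sum_congr rfl h1, Finset.sum_comm]
    have h3 : ∀ k : Fin q, (∑ j ∈ A i, if pair k = (j, i) ∨ pair k = (i, j) then d k else 0)
        = incB pair i k * d k := by
      intro k
      unfold incB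
      by_cases h1 : i = (pair k).1
      · rw [if_pos (Or.inl h1)]
        have hmem : (pair k).2 ∈ A i := h1 ▸ hadv k
        rw [Finset.sum_eq_single_of_mem (pair k).2 hmem]
        · have hk1 : pair k = (i, (pair k).2) := by rw [h1]
          rw [if_pos (Or.inr hk1)]
          ring
        · intro b hb hne
          rw [if_neg]
          rintro (h | h)
          · have hbi : b = i := by rw [h] at h1; exact h1.symm
            exact hAi i (hbi ▸ hb)
          · exact hne (by rw [h])
      · by_cases h2 : i = (pair k).2
        · rw [if_pos (Or.inr h2)]
          have hmem : (pair k).1 ∈ A i := by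
            rw [hAsymm]; exact h2 ▸ hadv k
          rw [Finset.sum_eq_single_of_mem (pair k).1 hmem]
          · have hk2 : pair k = ((pair k).1, i) := by rw [h2]
            rw [if_pos (Or.inl hk2)]
            ring
          · intro b hb hne
            rw [if_neg]
            rintro (h | h)
            · exact hne (by rw [h])
            · exact h1 (by rw [h])
        · rw [if_neg (by tauto)]
          rw [Finset.sum_eq_zero]
          · ring
          intro b hb
          rw [if_neg]
          rintro (h | h)
          · exact h2 (by rw [h])
          · exact h1 (by rw [h])
    rw [Finset.sum_congr rfl (fun k _ => h3 k)]
    rw [← sub_eq_zero]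
    have := hdec i
    rw [hci, add_zero] at this
    rw [← this, sub_self]
  have hfr : ∀ j ∈ F i, V j i = 0 := by
    intro j hj
    have hji : j ≠ i := fun h => hFi i (h ▸ hj)
    have hjA : j ∉ A i := Finset.disjoint_left.mp (hFA i) hj
    rw [congrFun (hVagree j hji) i]
    simp only [stratU, if_neg hji, zero_add]
    apply Finset.sum_eq_zero
    intro k _
    rw [if_neg]
    rintro (h | h)
    · exact hjA ((hAsymm i j).mpr (by have := hadv k; rw [h] at this; exact this))
    · exact hjA (by have := hadv k; rw [h] at this; exact this)
  have key : supportOf F A V i ≤ threatOf A V i := by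
    rw [hthreat]
    unfold supportOf
    rw [Finset.sum_congr rfl hfr, Finset.sum_const, smul_zero, add_zero]
    have : V i i + ∑ j ∈ A i, V i j = ∑ j ∈ insert i (A i), V i j := by
      rw [Finset.sum_insert (hAi i)]
    rw [this, ← hVsum i]
    exact Finset.sum_le_sum_of_subset_of_nonneg (Finset.subset_univ _)
      (fun j _ _ => hVnn i j)
  exact ⟨key, not_lt.2 key⟩
end

section
/- Let U be the strategy matrix constructed from a nonnegative decomposition p^T = B d + c in which no adversary pair {i,j} has both c_i > 0 and c_j > 0, and let i be a country with c_i > 0. Then x_i(U) = safe, every friend j ∈ F_i has x_j(U) ∈ {safe, precarious}, and every adversary j ∈ A_i has x_j(U) = precarious (in particular x_j(U) ∈ {unsafe, precarious}); i.e., country i achieves a best possible power allocation outcome under U. -/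
open Finset

/-- for the constructed `U` (with no adversary pair having both
reserves positive) and a country `i` with `c_i > 0`: `i` is safe, every friend
of `i` is safe or precarious, and every adversary of `i` is precarious. -/
theorem stmt10 (n q : ℕ) (p : Fin n → ℝ) (hp : ∀ i, 0 ≤ p i)
    (F A : Fin n → Finset (Fin n))
    (hFi : ∀ i, i ∉ F i) (hAi : ∀ i, i ∉ A i)
    (hFA : ∀ i, Disjoint (F i) (A i))
    (hFsymm : ∀ i j, j ∈ F i ↔ i ∈ F j)
    (hAsymm : ∀ i j, j ∈ A i ↔ i ∈ A j)
    (pair : Fin q → Fin n × Fin n)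
    (hadv : ∀ k, (pair k).2 ∈ A (pair k).1)
    (henum : ∀ i j, j ∈ A i → ∃! k, pair k = (i, j) ∨ pair k = (j, i))
    (d : Fin q → ℝ) (c : Fin n → ℝ)
    (hd : ∀ k, 0 ≤ d k) (hc : ∀ i, 0 ≤ c i)
    (hdec : ∀ i, p i = (∑ k, incB pair i k * d k) + c i)
    (hnot : ∀ i j, j ∈ A i → ¬ (0 < c i ∧ 0 < c j))
    (i : Fin n) (hci : 0 < c i) :
    threatOf A (stratU pair d c) i < supportOf F A (stratU pair d c) i ∧
    (∀ j ∈ F i,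
      threatOf A (stratU pair d c) j ≤ supportOf F A (stratU pair d c) j) ∧
    (∀ j ∈ A i,
      supportOf F A (stratU pair d c) j = threatOf A (stratU pair d c) j) := by
  set U := stratU pair d c with hU
  have hsym : ∀ a b, U a b = U b a := by
    intro a b
    simp only [hU, stratU]
    congr 1
    · rcases eq_or_ne a b with h | h
      · subst h; rfl
      · rw [if_neg h, if_neg (Ne.symm h)]
    · exact Finset.sum_congr rfl fun k _ => if_congr or_comm rfl rfl
  have hnn : ∀ a b, 0 ≤ U a b := by
    intro a b
    simp only [hU, stratU]
    apply add_nonneg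
    · split_ifs with h
      · exact hc a
      · exact le_rfl
    · exact Finset.sum_nonneg fun k _ => by split_ifs with h; exacts [hd k, le_rfl]
  have hzero : ∀ a b, a ≠ b → a ∉ A b → U a b = 0 := by
    intro a b hab hA
    simp only [hU, stratU]
    rw [if_neg hab, zero_add]
    apply Finset.sum_eq_zero
    intro k _
    rw [if_neg]
    rintro (h | h)
    · have := hadv k
      rw [h] at this
      exact hA ((hAsymm a b).mp this)
    · have := hadv k
      rw [h] at this
      exact hA this
  have hdiag : ∀ a, U a a = c a := by
    intro a
    simp only [hU, stratU]
    rw [if_pos trivial]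
    have : (∑ k, if pair k = (a, a) ∨ pair k = (a, a) then d k else 0) = 0 := by
      apply Finset.sum_eq_zero
      intro k _
      rw [if_neg]
      rintro (h | h) <;>
      · have := hadv k
        rw [h] at this
        exact hAi a this
    rw [this, add_zero]
  have hdiff : ∀ j, supportOf F A U j
      = c j + (∑ l ∈ F j, U l j) + threatOf A U j := by
    intro j
    unfold supportOf threatOf
    rw [hdiag j]
    have : (∑ l ∈ A j, U j l) = ∑ l ∈ A j, U l j :=
      Finset.sum_congr rfl fun l _ => hsym j l
    rw [this]
  have hFnn : ∀ j, 0 ≤ ∑ l ∈ F j, U l j :=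
    fun j => Finset.sum_nonneg fun l _ => hnn l j
  refine ⟨?_, ?_, ?_⟩
  · have := hdiff i
    have := hFnn i
    linarith
  · intro j _
    have := hdiff j
    have := hFnn j
    have := hc j
    linarith
  · intro j hj
    have hcj : c j = 0 := by
      rcases lt_or_eq_of_le (hc j) with h | h
      · exact absurd ⟨hci, h⟩ (hnot i j hj)
      · exact h.symm
    have hFz : (∑ l ∈ F j, U l j) = 0 := by
      apply Finset.sum_eq_zero
      intro l hl
      have hlj : l ≠ j := fun h => hFi j (h ▸ hl)
      have hlA : l ∉ A j := Finset.disjoint_left.mp (hFA j) hl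
      exact hzero l j hlj hlA
    rw [hdiff j, hcj, hFz, zero_add, zero_add]
end
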